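/- arXiv:2007.06879 — 4 statements merged into one kernel-verified Lean document; each statement's English description precedes it below -/
import Mathlib

section
/- The statement 'if f ∈ S and φ(E(u))^N · f ∈ 𝔖 + p^N S for all N ≥ 0, then f ∈ 𝔖' is false: the element f = E(u)^p/p ∈ S is a counterexample, i.e., f ∈ S, f ∉ 𝔖, yet φ(E(u))^N · f ∈ 𝔖 + p^N S for every N ≥ 0. -/
/-! The divided power `f = E^p/p = (p-1)! · E^p/p!` lies in `S`, and it is not in `𝔖` because
its coefficient in degree `p · deg E` is `1/p`. Since `p f = E^p ∈ 𝔖` and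
`φ(E)^N ≡ E^{pN} mod p𝔖`, we get `φ(E)^N f ≡ E^{pN} f = p^N f^{N+1}` modulo `E^p 𝔖 ⊆ 𝔖`. -/

lemma charZero_of_natCast_ne_zero_of_not_isUnit {O : Type*} [CommRing O] [IsDomain O] {n : ℕ}
    (h0 : (n : O) ≠ 0) (hu : ¬IsUnit (n : O)) : CharZero O := by
  obtain ⟨q, hq⟩ := CharP.exists O
  rcases CharP.char_is_prime_or_zero O q with hprime | rfl
  · -- in prime characteristic `q`, every `n` with `q ∤ n` is a unit
    exact absurd ((CharP.isUnit_natCast_iff hprime).2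
      fun h => h0 ((CharP.cast_eq_zero_iff O q n).2 h)) hu
  · exact CharP.charP_to_charZero O

lemma inv_natCast_smul_mem_of_inv_factorial_smul_mem {K A : Type*} [Field K] [CharZero K] [Ring A]
    [Algebra K A] (S : Subring A) {x : A} {n : ℕ} (hx : ((Nat.factorial n : K)⁻¹ • x) ∈ S) :
    (n : K)⁻¹ • x ∈ S := by
  rcases Nat.eq_zero_or_pos n with rfl | hn
  · simp
  have hinv : (n : K)⁻¹ = (Nat.factorial (n - 1) : K) * (Nat.factorial n : K)⁻¹ := by
    have : (Nat.factorial (n - 1) : K) ≠ 0 := Nat.cast_ne_zero.2 (Nat.factorial_ne_zero _)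
    rw [← Nat.mul_factorial_pred hn.ne', Nat.cast_mul]
    field_simp
  rw [hinv, ← smul_smul, Nat.cast_smul_eq_nsmul]
  exact nsmul_mem hx _

lemma inv_natCast_notMem_range_algebraMap {O K : Type*} [CommRing O] [Field K] [Algebra O K]
    (hinj : Function.Injective (algebraMap O K)) {n : ℕ} (hn : (n : K) ≠ 0)
    (hu : ¬IsUnit (n : O)) : (n : K)⁻¹ ∉ Set.range (algebraMap O K) := by
  rintro ⟨y, hy⟩
  refine hu (.of_mul_eq_one y (hinj ?_))
  rw [map_mul, map_natCast, hy, map_one, mul_inv_cancel₀ hn]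

lemma PowerSeries.smul_map_monic_notMem_range_map {O K : Type*} [CommRing O] [Field K]
    [Algebra O K] {P : Polynomial O} (hP : P.Monic) {c : K} (hc : c ∉ Set.range (algebraMap O K)) :
    c • PowerSeries.map (algebraMap O K) (P : PowerSeries O) ∉
      (PowerSeries.map (algebraMap O K)).range := by
  rintro ⟨g, hg⟩
  refine hc ⟨PowerSeries.coeff P.natDegree g, ?_⟩
  rw [← PowerSeries.coeff_map, hg, PowerSeries.coeff_smul, PowerSeries.coeff_map,
    Polynomial.coeff_coe, hP.coeff_natDegree, map_one, smul_eq_mul, mul_one]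

lemma Subring.exists_add_mul_pow_eq {R : Type*} [CommRing R] (T : Subring R) {a m c : R}
    (ha : a ∈ T) (hm : m ∈ T) (hc : c ∈ T) (N : ℕ) :
    ∃ d ∈ T, (a + m * c) ^ N = a ^ N + m * d := by
  induction N with
  | zero => exact ⟨0, T.zero_mem, by simp⟩
  | succ N ih =>
    obtain ⟨d, hd, hpow⟩ := ih
    refine ⟨a ^ N * c + d * (a + m * c), ?_, by rw [pow_succ, hpow]; ring⟩
    exact add_mem (mul_mem (pow_mem ha N) hc) (mul_mem hd (add_mem ha (mul_mem hm hc)))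

lemma Subring.exists_add_mul_pow_mul_eq {R : Type*} [CommRing R] (T S : Subring R)
    {e f m c : R} (he : e ∈ T) (hf : f ∈ S) (hm : m ∈ T) (hc : c ∈ T) (hmf : m * f = e) (N : ℕ) :
    ∃ g ∈ T, ∃ s ∈ S, (e + m * c) ^ N * f = g + m ^ N * s := by
  obtain ⟨d, hd, hpow⟩ := T.exists_add_mul_pow_eq he hm hc N
  refine ⟨d * e, mul_mem hd he, f ^ (N + 1), pow_mem hf _, ?_⟩
  rw [hpow, ← hmf]
  ring

theorem stmt2_general
    {O : Type*} [CommRing O] [IsDomain O]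
    (K₀ : Type*) [Field K₀] [Algebra O K₀] [IsFractionRing O K₀]
    (p : ℕ) (hpO : ¬ IsUnit (p : O)) (hp0 : (p : O) ≠ 0)
    (E : Polynomial O) (hE : E.Monic)
    (𝔖 : Subring (PowerSeries K₀))
    (h𝔖 : 𝔖 = (PowerSeries.map (algebraMap O K₀)).range)
    (Ek : PowerSeries K₀)
    (hEk : Ek = PowerSeries.map (algebraMap O K₀) (PowerSeries.mk fun n => E.coeff n))
    (S : Subring (PowerSeries K₀))
    -- `S` contains all divided powers `E^i/i!` :
    (hSdiv : ∀ i : ℕ, ((Nat.factorial i : K₀)⁻¹ • (Ek ^ i)) ∈ S)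
    (φ : PowerSeries K₀ →+* PowerSeries K₀)
    -- `φ(E) ≡ E^p` modulo `p·𝔖` :
    (hφE : ∃ c ∈ 𝔖, φ Ek = Ek ^ p + (p : PowerSeries K₀) * c) :
    (((p : K₀)⁻¹ • (Ek ^ p)) ∈ S) ∧
    (((p : K₀)⁻¹ • (Ek ^ p)) ∉ 𝔖) ∧
    (∀ N : ℕ, ∃ g ∈ 𝔖, ∃ s ∈ S,
      (φ Ek) ^ N * ((p : K₀)⁻¹ • (Ek ^ p)) = g + (p : PowerSeries K₀) ^ N * s) := by
  have hinj : Function.Injective (algebraMap O K₀) := IsFractionRing.injective O K₀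
  have : CharZero O := charZero_of_natCast_ne_zero_of_not_isUnit hp0 hpO
  have : CharZero K₀ := charZero_of_injective_algebraMap hinj
  have hpK : (p : K₀) ≠ 0 := by rwa [← map_natCast (algebraMap O K₀), hinj.ne_iff' (map_zero _)]
  have hEkp :
      Ek ^ p = PowerSeries.map (algebraMap O K₀) ((E ^ p : Polynomial O) : PowerSeries O) := by
    rw [Polynomial.coe_pow, map_pow, hEk, Polynomial.coe_def]
  have hf : ((p : K₀)⁻¹ • Ek ^ p) ∈ S :=
    inv_natCast_smul_mem_of_inv_factorial_smul_mem S (hSdiv p)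
  refine ⟨hf, ?_, fun N => ?_⟩
  · rw [h𝔖, hEkp]
    exact PowerSeries.smul_map_monic_notMem_range_map (hE.pow p)
      (inv_natCast_notMem_range_algebraMap hinj hpK hpO)
  · obtain ⟨c, hc, hφ⟩ := hφE
    have hEp : Ek ^ p ∈ 𝔖 := by rw [h𝔖, hEkp]; exact ⟨_, rfl⟩
    refine hφ ▸ 𝔖.exists_add_mul_pow_mul_eq S hEp hf (natCast_mem 𝔖 p) hc ?_ N
    rw [← map_natCast (algebraMap K₀ (PowerSeries K₀)), ← Algebra.smul_def, smul_smul,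
      mul_inv_cancel₀ hpK, one_smul]

/-- With `𝔖 = 𝒪_{K₀}[[u]]` (realized as the image of `(𝒪_{K₀})[[u]]` inside
`K₀[[u]]`), `E(u)` an Eisenstein (monic, with non-unit constant term divisible by `p`)
polynomial, `S ⊂ K₀[[u]]` the `p`-adic completion of the PD-envelope of `𝒪_{K₀}[u]` along
`(E(u))` (so `S` contains `𝔖` and all divided powers `E(u)^i/i!`), and `φ` the Frobenius
(with `φ(E) ≡ E^p mod p𝔖`), the statement
"if `f ∈ S` and `φ(E(u))^N · f ∈ 𝔖 + p^N S` for all `N ≥ 0`, then `f ∈ 𝔖`"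
is false: the element `f = E(u)^p/p ∈ S` is a counterexample, i.e. `f ∈ S`, `f ∉ 𝔖`,
yet `φ(E(u))^N · f ∈ 𝔖 + p^N S` for every `N ≥ 0`. -/
theorem stmt2
    {O : Type*} [CommRing O] [IsDomain O]
    (K₀ : Type*) [Field K₀] [Algebra O K₀] [IsFractionRing O K₀]
    (p : ℕ) (hp : p.Prime) (hpO : ¬ IsUnit (p : O)) (hp0 : (p : O) ≠ 0)
    (E : Polynomial O) (hE : E.Monic)
    (hEis : E.IsEisensteinAt (Ideal.span {(p : O)}))
    (𝔖 : Subring (PowerSeries K₀))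
    (h𝔖 : 𝔖 = (PowerSeries.map (algebraMap O K₀)).range)
    (Ek : PowerSeries K₀)
    (hEk : Ek = PowerSeries.map (algebraMap O K₀) (PowerSeries.mk fun n => E.coeff n))
    (S : Subring (PowerSeries K₀))
    (hS𝔖 : 𝔖 ≤ S)
    -- `S` contains all divided powers `E^i/i!` :
    (hSdiv : ∀ i : ℕ, ((Nat.factorial i : K₀)⁻¹ • (Ek ^ i)) ∈ S)
    (φ : PowerSeries K₀ →+* PowerSeries K₀)
    -- `φ(E) ≡ E^p` modulo `p·𝔖` :
    (hφE : ∃ c ∈ 𝔖, φ Ek = Ek ^ p + (p : PowerSeries K₀) * c) :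
    (((p : K₀)⁻¹ • (Ek ^ p)) ∈ S) ∧
    (((p : K₀)⁻¹ • (Ek ^ p)) ∉ 𝔖) ∧
    (∀ N : ℕ, ∃ g ∈ 𝔖, ∃ s ∈ S,
      (φ Ek) ^ N * ((p : K₀)⁻¹ • (Ek ^ p)) = g + (p : PowerSeries K₀) ^ N * s) :=
  stmt2_general K₀ p hpO hp0 E hE 𝔖 h𝔖 Ek hEk S hSdiv φ hφE
end

section
/- Let K be a complete discrete valuation field of mixed characteristic, π a uniformizer, and fix compatible p-power roots π_n (π₀ = π, π_{n+1}^p = π_n), setting K_∞ = ∪_n K(π_n). Let 𝕂 be a complete unramified-closure type extension of K (i.e. 𝕂 = 𝕂₀·K with 𝕂₀/K₀ an extension obtained by perfecting the residue field, so 𝕂 ∩ K̄ contains K and 𝕂/K has trivial ramification). Then 𝕂 ∩ K_∞ = K, and consequently the subgroups G_𝕂 and G_{K_∞} together generate G_K as a topological group. -/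
/-!
An element of `L ⊓ Kinf` different from the base field would generate a nontrivial
subextension of the totally ramified `Kinf` all of whose values are values of `K`, which is
impossible; hence `L ⊓ Kinf = K`. By infinite Galois theory the fixed field of the subgroup
generated by `G_L` and `G_Kinf` is `L ⊓ Kinf = K`, and a subgroup of `G_K` with trivial fixed
field is dense in the Krull topology.
-/

open IntermediateField

theorem IntermediateField.inf_eq_bot_of_valuation {F E Γ : Type*} [Field F] [Field E]
    [Algebra F E] [LinearOrderedCommGroupWithZero Γ] (v : Valuation E Γ)
    {L M : IntermediateField F E}
    (hL : ∀ x ∈ L, x ≠ 0 → ∃ y : F, y ≠ 0 ∧ v x = v (algebraMap F E y))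
    (hM : ∀ N : IntermediateField F E, N ≤ M → N ≠ ⊥ →
      ∃ x ∈ N, x ≠ 0 ∧ ∀ y : F, y ≠ 0 → v x ≠ v (algebraMap F E y)) :
    L ⊓ M = ⊥ := by
  by_contra hne
  obtain ⟨x, hx, hx0, hxv⟩ := hM (L ⊓ M) inf_le_right hne
  obtain ⟨y, hy0, hyv⟩ := hL x hx.1 hx0
  exact hxv y hy0 hyv

theorem IntermediateField.fixedField_closure_fixingSubgroup_union {F E : Type*} [Field F]
    [Field E] [Algebra F E] [IsGalois F E] (L M : IntermediateField F E) :
    fixedField (Subgroup.closure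
      ((L.fixingSubgroup : Set Gal(E/F)) ∪ (M.fixingSubgroup : Set Gal(E/F)))) = L ⊓ M := by
  rw [Subgroup.closure_union, Subgroup.closure_eq, Subgroup.closure_eq]
  refine le_antisymm (le_inf ?_ ?_) ((le_iff_le _ _).mpr (sup_le ?_ ?_))
  · conv_rhs => rw [← InfiniteGalois.fixedField_fixingSubgroup L]
    exact fixedField_le le_sup_left
  · conv_rhs => rw [← InfiniteGalois.fixedField_fixingSubgroup M]
    exact fixedField_le le_sup_right
  · exact fixingSubgroup_le inf_le_left
  · exact fixingSubgroup_le inf_le_right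

theorem InfiniteGalois.dense_of_fixedField_eq_bot {F E : Type*} [Field F] [Field E]
    [Algebra F E] [IsGalois F E] (H : Subgroup Gal(E/F)) (hH : fixedField H = ⊥) :
    Dense (H : Set Gal(E/F)) := by
  let C : ClosedSubgroup Gal(E/F) := ⟨H.topologicalClosure, H.isClosed_topologicalClosure⟩
  have hC : fixedField C.toSubgroup = ⊥ :=
    eq_bot_iff.mpr (hH ▸ fixedField_le H.le_topologicalClosure)
  have hCtop : H.topologicalClosure = ⊤ := by
    rw [← fixingSubgroup_bot, ← hC]
    exact (fixingSubgroup_fixedField C).symm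
  rw [dense_iff_closure_eq, ← Subgroup.topologicalClosure_coe, hCtop, Subgroup.coe_top]

theorem stmt3_general
    (K Ω : Type*) [Field K] [Field Ω] [Algebra K Ω] [IsAlgClosure K Ω] [CharZero K]
    {Γ : Type*} [LinearOrderedCommGroupWithZero Γ]
    (v : Valuation Ω Γ)
    (Kinf : IntermediateField K Ω)
    (L : IntermediateField K Ω)
    -- `L` is unramified over `K`: its value group is that of `K`:
    (hunram : ∀ x ∈ L, x ≠ 0 → ∃ y : K, y ≠ 0 ∧ v x = v (algebraMap K Ω y))
    -- `Kinf` is totally ramified over `K`: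
    (htotram : ∀ M : IntermediateField K Ω, M ≤ Kinf → M ≠ ⊥ →
      ∃ x ∈ M, x ≠ 0 ∧ ∀ y : K, y ≠ 0 → v x ≠ v (algebraMap K Ω y)) :
    L ⊓ Kinf = ⊥ ∧
    closure ((Subgroup.closure
        ((L.fixingSubgroup : Set (Ω ≃ₐ[K] Ω)) ∪ (Kinf.fixingSubgroup : Set (Ω ≃ₐ[K] Ω)))
        : Subgroup (Ω ≃ₐ[K] Ω)) : Set (Ω ≃ₐ[K] Ω)) = Set.univ := by
  have hbot : L ⊓ Kinf = ⊥ := inf_eq_bot_of_valuation v hunram htotram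
  have : IsGalois K Ω := isGalois_iff.mpr ⟨inferInstance, IsAlgClosure.normal K Ω⟩
  refine ⟨hbot, dense_iff_closure_eq.mp (InfiniteGalois.dense_of_fixedField_eq_bot _ ?_)⟩
  rw [fixedField_closure_fixingSubgroup_union, hbot]

/-- Let `K` be a complete discrete valuation field of mixed characteristic
`(0,p)`, `Ω` an algebraic closure of `K` carrying a valuation `v`, `π n` compatible `p`-power
roots of a uniformizer `π 0` of `K`, and `Kinf = ∪ₙ K(πₙ)` the Kummer tower, which is totally
ramified over `K` (every nontrivial subextension contains an element whose valuation is not a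
valuation from `K`).  Let `L = 𝕂 ∩ K̄` be the algebraic part of the "unramified" extension
`𝕂` of `K`, so that all valuations of elements of `L` already occur on `K`.  Then
`L ∩ Kinf = K`, and consequently the fixing subgroups `G_𝕂 = Gal(Ω/L)` and
`G_{Kinf} = Gal(Ω/Kinf)` together generate `G_K = Gal(Ω/K)` as a topological group
(their abstract join is dense for the Krull topology). -/
theorem stmt3 (p : ℕ) (hp : p.Prime)
    (K Ω : Type*) [Field K] [Field Ω] [Algebra K Ω] [IsAlgClosure K Ω] [CharZero K]
    {Γ : Type*} [LinearOrderedCommGroupWithZero Γ]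
    (v : Valuation Ω Γ)
    (π : ℕ → Ω)
    (hπ0 : π 0 ∈ (algebraMap K Ω).range)
    (hπunif : π 0 ≠ 0 ∧ v (π 0) < 1)
    (hπ : ∀ n : ℕ, π (n + 1) ^ p = π n)
    (Kinf : IntermediateField K Ω)
    (hKinf : Kinf = IntermediateField.adjoin K (Set.range π))
    (L : IntermediateField K Ω)
    -- `L` is unramified over `K`: its value group is that of `K`:
    (hunram : ∀ x ∈ L, x ≠ 0 → ∃ y : K, y ≠ 0 ∧ v x = v (algebraMap K Ω y))
    -- `Kinf` is totally ramified over `K`: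
    (htotram : ∀ M : IntermediateField K Ω, M ≤ Kinf → M ≠ ⊥ →
      ∃ x ∈ M, x ≠ 0 ∧ ∀ y : K, y ≠ 0 → v x ≠ v (algebraMap K Ω y)) :
    L ⊓ Kinf = ⊥ ∧
    closure ((Subgroup.closure
        ((L.fixingSubgroup : Set (Ω ≃ₐ[K] Ω)) ∪ (Kinf.fixingSubgroup : Set (Ω ≃ₐ[K] Ω)))
        : Subgroup (Ω ≃ₐ[K] Ω)) : Set (Ω ≃ₐ[K] Ω)) = Set.univ :=
  stmt3_general K Ω v Kinf L hunram htotram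
end

section
/- Let D be a finite-dimensional vector space over K₀ with a K₀-linear operator N and a φ_{K₀}-semilinear operator φ whose linearization K₀ ⊗_{φ,K₀} D → D is bijective, satisfying Nφ = pφN. Then N is nilpotent. -/
open Polynomial Matrix Module

/-- Coefficients of a composition with `C a * X`. -/
lemma aux_coeff_comp_C_mul_X {R : Type*} [CommRing R] (P : R[X]) (a : R) (i : ℕ) :
    (P.comp (C a * X)).coeff i = P.coeff i * a ^ i := by
  induction P using Polynomial.induction_on' with
  | add p q hp hq => simp [hp, hq, add_mul]
  | monomial j c =>
    rw [monomial_comp, coeff_C_mul, mul_pow, ← C_pow, coeff_C_mul, coeff_X_pow,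
      coeff_monomial]
    rcases eq_or_ne i j with rfl | h
    · simp [mul_comm]
    · simp [h, Ne.symm h]

/-- Characteristic polynomial of a scalar multiple, coefficientwise. -/
lemma aux_charpoly_smul_coeff {K : Type*} [Field K] {n : ℕ}
    (M : Matrix (Fin n) (Fin n) K) {s : K} (hs : s ≠ 0) (i : ℕ) :
    (s • M).charpoly.coeff i = s ^ n * (s⁻¹) ^ i * M.charpoly.coeff i := by
  classical
  set ε : K[X] →+* K[X] := eval₂RingHom Polynomial.C (C s⁻¹ * X) with hε
  have hmap : (charmatrix M).map ε = Polynomial.C s⁻¹ • charmatrix (s • M) := by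
    ext i j
    rcases eq_or_ne i j with rfl | h
    · simp only [Matrix.map_apply, charmatrix_apply_eq, Matrix.smul_apply,
        Matrix.smul_apply, smul_eq_mul, hε, coe_eval₂RingHom, eval₂_sub, eval₂_X, eval₂_C]
      rw [mul_sub, ← C_mul, inv_mul_cancel_left₀ hs]
    · simp only [Matrix.map_apply, charmatrix_apply_ne _ _ _ h, Matrix.smul_apply,
        Matrix.smul_apply, smul_eq_mul, hε, coe_eval₂RingHom, eval₂_neg, eval₂_C]
      rw [mul_neg, ← C_mul, inv_mul_cancel_left₀ hs]
  have h1 : ε M.charpoly = (Polynomial.C s⁻¹) ^ n * (s • M).charpoly := by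
    rw [Matrix.charpoly, RingHom.map_det, RingHom.mapMatrix_apply, hmap, Matrix.det_smul,
      Fintype.card_fin, Matrix.charpoly]
  have h2 : (s • M).charpoly = (Polynomial.C s) ^ n * ε M.charpoly := by
    rw [h1, ← mul_assoc, ← mul_pow, ← C_mul, mul_inv_cancel₀ hs, C_1, one_pow, one_mul]
  have h3 : ε M.charpoly = M.charpoly.comp (C s⁻¹ * X) := by
    simp [hε, coe_eval₂RingHom, Polynomial.comp]
  rw [h2, h3, ← C_pow, coeff_C_mul, aux_coeff_comp_C_mul_X]
  ring

/-- Similar matrices (via an invertible matrix) have the same characteristic polynomial. -/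
lemma aux_charpoly_eq_of_mul {K : Type*} [Field K] {n : ℕ}
    (M A B : Matrix (Fin n) (Fin n) K) (hA : A.det ≠ 0) (h : M * A = A * B) :
    M.charpoly = B.charpoly := by
  classical
  have hcm : charmatrix M * A.map Polynomial.C = A.map Polynomial.C * charmatrix B := by
    have hscal : ∀ (Y : Matrix (Fin n) (Fin n) K[X]),
        Matrix.scalar (Fin n) (X : K[X]) * Y = Y * Matrix.scalar (Fin n) (X : K[X]) :=
      fun Y => (Matrix.scalar_commute (X : K[X]) (fun r => Commute.all _ _) Y).eq
    have hmc : ∀ (P Q : Matrix (Fin n) (Fin n) K),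
        (P.map (Polynomial.C : K → K[X])) * (Q.map Polynomial.C) = (P * Q).map Polynomial.C := by
      intro P Q
      ext i j
      simp [Matrix.mul_apply, Matrix.map_apply, map_sum]
    simp only [charmatrix, RingHom.mapMatrix_apply]
    rw [sub_mul, mul_sub, hscal, hmc, hmc, h]
  have hdet : M.charpoly * Polynomial.C A.det = B.charpoly * Polynomial.C A.det := by
    have h2 := congrArg Matrix.det hcm
    rw [Matrix.det_mul, Matrix.det_mul] at h2
    have hCdet : (A.map (Polynomial.C : K → K[X])).det = Polynomial.C A.det := by
      rw [← RingHom.mapMatrix_apply, ← RingHom.map_det]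
    rw [hCdet] at h2
    rw [Matrix.charpoly, Matrix.charpoly]
    linear_combination h2
  have hC : (Polynomial.C A.det : K[X]) ≠ 0 := by
    simpa using hA
  exact mul_right_cancel₀ hC hdet

/-- Let `K₀` be a complete discretely valued field of characteristic `0`
with `v(p) < 1`, `σ : K₀ → K₀` a valuation-preserving ring endomorphism lifting the `p`-power
map of the residue field, `D` a finite-dimensional `K₀`-vector space with a `K₀`-linear
operator `N` and a `σ`-semilinear operator `φ` whose linearization
`K₀ ⊗_{σ,K₀} D → D` is bijective (equivalently, in finite dimension, the image of `φ`
spans `D`), satisfying `Nφ = pφN`.  Then `N` is nilpotent. -/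
theorem stmt5 (p : ℕ) (hp : p.Prime)
    {K₀ : Type*} [Field K₀] [CharZero K₀]
    {Γ : Type*} [LinearOrderedCommGroupWithZero Γ]
    (v : Valuation K₀ Γ)
    (hvp : v (p : K₀) < 1) (hp0 : (p : K₀) ≠ 0)
    (σ : K₀ →+* K₀) (hσ : ∀ c : K₀, v (σ c) = v c)
    {D : Type*} [AddCommGroup D] [Module K₀ D] [FiniteDimensional K₀ D]
    (φ : D →+ D)
    (hφ : ∀ (c : K₀) (x : D), φ (c • x) = σ c • φ x)
    (hφinj : Function.Injective φ)
    (hφspan : Submodule.span K₀ (Set.range φ) = ⊤)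
    (N : D →ₗ[K₀] D)
    (hNφ : ∀ x : D, N (φ x) = (p : K₀) • φ (N x)) :
    IsNilpotent N := by
  classical
  set n := finrank K₀ D with hn
  set b : Basis (Fin n) K₀ D := Module.finBasis K₀ D with hb
  set M : Matrix (Fin n) (Fin n) K₀ := LinearMap.toMatrix b b N with hM
  set A : Matrix (Fin n) (Fin n) K₀ := b.toMatrix (fun j => φ (b j)) with hA
  -- A is invertible
  have hspan' : ⊤ ≤ Submodule.span K₀ (Set.range fun j => φ (b j)) := by
    rw [← hφspan]
    rw [Submodule.span_le]
    rintro y ⟨x, rfl⟩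
    have hx : φ x = ∑ j, σ (b.repr x j) • φ (b j) := by
      conv_lhs => rw [← b.sum_repr x]
      rw [map_sum]
      exact Finset.sum_congr rfl fun j _ => hφ _ _
    rw [hx]
    exact Submodule.sum_mem _ fun j _ =>
      Submodule.smul_mem _ _ (Submodule.subset_span ⟨j, rfl⟩)
  have hcard : Fintype.card (Fin n) = finrank K₀ D := by simp [hn]
  set c : Basis (Fin n) K₀ D := basisOfTopLeSpanOfCardEqFinrank _ hspan' hcard with hc
  have hcc : ⇑c = fun j => φ (b j) := coe_basisOfTopLeSpanOfCardEqFinrank _ _ _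
  have hdetA : A.det ≠ 0 := by
    have : A = b.toMatrix ⇑c := by rw [hcc]
    rw [this, ← Basis.det_apply]
    exact (b.isUnit_det c).ne_zero
  -- matrix relation
  have hAe : ∀ j k, b.repr (φ (b j)) k = A k j := fun j k => by
    simp [hA, Basis.toMatrix_apply]
  have hMe : ∀ j k, b.repr (N (b j)) k = M k j := fun j k => by
    rw [hM, LinearMap.toMatrix_apply]
  have hrel : M * A = A * (((p : K₀) • M).map σ) := by
    ext i j
    have h1 : N (φ (b j)) = ∑ k, A k j • N (b k) := by
      conv_lhs => rw [← b.sum_repr (φ (b j))]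
      rw [map_sum]
      refine Finset.sum_congr rfl fun k _ => ?_
      rw [LinearMap.map_smul, hAe j k]
    have h2 : (p : K₀) • φ (N (b j)) = ∑ k, ((p : K₀) * σ (M k j)) • φ (b k) := by
      conv_lhs => rw [← b.sum_repr (N (b j))]
      rw [map_sum, Finset.smul_sum]
      refine Finset.sum_congr rfl fun k _ => ?_
      rw [hφ, smul_smul, hMe j k]
    have key := hNφ (b j)
    rw [h1, h2] at key
    have h3 := congrArg (fun z => b.repr z i) key
    simp only [map_sum, _root_.map_smul, Finsupp.coe_smul, Pi.smul_apply, smul_eq_mul] at h3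
    simp only [Finset.sum_apply', Finsupp.smul_apply, smul_eq_mul, hMe, hAe] at h3
    rw [Matrix.mul_apply, Matrix.mul_apply]
    calc ∑ k, M i k * A k j = ∑ k, A k j * M i k :=
          Finset.sum_congr rfl fun k _ => mul_comm _ _
      _ = ∑ k, (p : K₀) * σ (M k j) * A i k := h3
      _ = ∑ k, A i k * (((p : K₀) • M).map σ) k j := by
          refine Finset.sum_congr rfl fun k _ => ?_
          rw [Matrix.map_apply, Matrix.smul_apply, smul_eq_mul, _root_.map_mul, map_natCast]
          ring
  -- characteristic polynomial identity
  have hcp : M.charpoly = (((p : K₀) • M).charpoly).map σ := by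
    rw [← Matrix.charpoly_map]
    exact aux_charpoly_eq_of_mul M A _ hdetA hrel
  have hcoeff : ∀ i, M.charpoly.coeff i =
      (p : K₀) ^ n * ((p : K₀)⁻¹) ^ i * σ (M.charpoly.coeff i) := by
    intro i
    conv_lhs => rw [hcp]
    rw [Polynomial.coeff_map, aux_charpoly_smul_coeff _ hp0, _root_.map_mul, _root_.map_mul,
      map_pow, map_pow, map_inv₀, map_natCast]
  -- valuation argument: lower coefficients vanish
  have hvzero : ∀ i, i < n → M.charpoly.coeff i = 0 := by
    intro i hi
    by_contra hne
    have hvc : v (M.charpoly.coeff i) ≠ 0 := by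
      simpa [Valuation.zero_iff] using hne
    have := congrArg v (hcoeff i)
    rw [_root_.map_mul, _root_.map_mul, map_pow, map_pow, map_inv₀, hσ] at this
    set a := v ((p : K₀)) with ha
    have ha0 : a ≠ 0 := by simpa [ha, Valuation.zero_iff] using hp0
    -- from v c = a^n * a⁻¹^i * v c deduce a^(n-i) = 1
    have h1 : a ^ n * a⁻¹ ^ i = 1 := by
      have h := this
      nth_rewrite 1 [← one_mul (v (M.charpoly.coeff i))] at h
      exact (mul_right_cancel₀ hvc h).symm
    have h2 : a ^ (n - i) = 1 := by
      have : a ^ n = a ^ i := by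
        have := congrArg (· * a ^ i) h1
        simp only [one_mul, mul_assoc, ← mul_pow, inv_mul_cancel₀ ha0, one_pow, mul_one] at this
        exact this
      have hsplit : a ^ n = a ^ (n - i) * a ^ i := by
        rw [← pow_add, Nat.sub_add_cancel hi.le]
      rw [hsplit] at this
      have hai : a ^ i ≠ 0 := pow_ne_zero _ ha0
      calc a ^ (n - i) = a ^ (n - i) * a ^ i * (a ^ i)⁻¹ := by
            rw [mul_assoc, mul_inv_cancel₀ hai, mul_one]
        _ = a ^ i * (a ^ i)⁻¹ := by rw [this]
        _ = 1 := mul_inv_cancel₀ hai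
    have hlt : a ^ (n - i) < 1 := by
      have hpos : n - i ≠ 0 := Nat.sub_ne_zero_of_lt hi
      calc a ^ (n - i) ≤ a ^ 1 := pow_le_pow_of_le_one zero_le' hvp.le (by omega)
        _ = a := pow_one a
        _ < 1 := hvp
    rw [h2] at hlt
    exact absurd hlt (lt_irrefl 1)
  -- conclude charpoly = X^n
  have hXn : N.charpoly = X ^ n := by
    have hMc : N.charpoly = M.charpoly := (LinearMap.charpoly_toMatrix N b).symm
    rw [hMc]
    have hmon : M.charpoly.Monic := Matrix.charpoly_monic M
    have hdeg : M.charpoly.natDegree = n := by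
      rw [Matrix.charpoly_natDegree_eq_dim, Fintype.card_fin]
    ext i
    rcases lt_trichotomy i n with h | rfl | h
    · rw [hvzero i h, coeff_X_pow, if_neg h.ne]
    · have h := hmon.coeff_natDegree
      rw [hdeg] at h
      rw [coeff_X_pow, if_pos rfl]
      exact h
    · rw [coeff_X_pow, if_neg h.ne', Polynomial.coeff_eq_zero_of_natDegree_lt]
      omega
  rw [LinearMap.isNilpotent_iff_charpoly]
  exact hXn
end

section
/- Let 𝔖 = O_{K₀}[[u]], let O_E be the p-adic completion of 𝔖[1/u], and let 𝔖_𝕂 = O_{𝕂₀}[[u]] where O_{K₀} ⊂ O_{𝕂₀} is an extension of complete DVRs with p as uniformizer (𝕂₀ obtained by perfecting the residue field). Then inside O_{E_𝕂} (the p-adic completion of 𝔖_𝕂[1/u]) one has 𝔖 = O_E ∩ 𝔖_𝕂. -/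
theorem PowerSeries.exists_map_eq_of_forall_coeff_mem_range {R S : Type*} [CommRing R]
    [CommRing S] (φ : R →+* S) (f : PowerSeries S) (h : ∀ i, ∃ b : R, φ b = coeff i f) :
    ∃ g : PowerSeries R, map φ g = f := by
  choose b hb using h
  exact ⟨mk b, by ext i; simp [hb]⟩

theorem stmt8_general {O O' : Type*} [CommRing O] [CommRing O']
    (f₀ : O →+* O')
    (p : ℕ)
    -- `O` is `p`-adically closed in `O'`:
    (hclosed : ∀ a : O', (∀ n : ℕ, ∃ b : O, ∃ c : O', a - f₀ b = (p : O') ^ n * c) →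
      ∃ b : O, f₀ b = a) :
    ∀ f : PowerSeries O',
      (∀ n : ℕ, ∃ (k : ℕ) (g : PowerSeries O),
          ∀ i : ℕ, ∃ c : O',
            PowerSeries.coeff i (PowerSeries.X ^ k * f) - f₀ (PowerSeries.coeff i g)
              = (p : O') ^ n * c)
        ↔ ∃ g : PowerSeries O, PowerSeries.map f₀ g = f := by
  intro f
  constructor
  · intro happrox
    refine PowerSeries.exists_map_eq_of_forall_coeff_mem_range f₀ f fun i => hclosed _ fun n => ?_
    obtain ⟨k, g, hg⟩ := happrox n
    -- the coefficient of `u^i` in `f` is the coefficient of `u^(i+k)` in `u^k f`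
    obtain ⟨c, hc⟩ := hg (i + k)
    rw [PowerSeries.coeff_X_pow_mul] at hc
    exact ⟨PowerSeries.coeff (i + k) g, c, hc⟩
  · rintro ⟨g, rfl⟩ n
    exact ⟨0, g, fun i => ⟨0, by simp⟩⟩

/-- Let `𝒪_{K₀} → 𝒪_{𝕂₀}` (here `f₀ : O → O'`) be an injective extension of
complete DVRs with common uniformizer `p`, with `O` `p`-adically closed in `O'` (the
perfected-residue-field extension).  Set `𝔖 = O[[u]]`, `𝔖_𝕂 = O'[[u]]`, and let `O_E`
(resp. `O_{E_𝕂}`) be the `p`-adic completion of `𝔖[1/u]` (resp. `𝔖_𝕂[1/u]`).  Then, inside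
`O_{E_𝕂}`, one has `𝔖 = O_E ∩ 𝔖_𝕂`.  Since the intersection takes place inside
`𝔖_𝕂 = O'[[u]]`, this says precisely: a power series `f ∈ O'[[u]]` lies in `O_E` — i.e. for
every `n` there are `k ∈ ℕ` and `g ∈ 𝔖` with `u^k·f ≡ g mod p^n` (approximation by
`u^{-k}·𝔖 ⊆ 𝔖[1/u]`) — if and only if `f` comes from `𝔖 = O[[u]]`. -/
theorem stmt8 {O O' : Type*} [CommRing O] [CommRing O']
    (f₀ : O →+* O') (hf₀ : Function.Injective f₀)
    (p : ℕ) (hp : p.Prime)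
    -- `O` is `p`-adically closed in `O'`:
    (hclosed : ∀ a : O', (∀ n : ℕ, ∃ b : O, ∃ c : O', a - f₀ b = (p : O') ^ n * c) →
      ∃ b : O, f₀ b = a) :
    ∀ f : PowerSeries O',
      (∀ n : ℕ, ∃ (k : ℕ) (g : PowerSeries O),
          ∀ i : ℕ, ∃ c : O',
            PowerSeries.coeff i (PowerSeries.X ^ k * f) - f₀ (PowerSeries.coeff i g)
              = (p : O') ^ n * c)
        ↔ ∃ g : PowerSeries O, PowerSeries.map f₀ g = f :=
  stmt8_general f₀ p hclosed
end
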